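/- arXiv:2010.05593 — 4 statements merged into one kernel-verified Lean document; each statement's English description precedes it below -/
import Mathlib

section
/- Let V be a symmetric positive definite real p×p matrix, μ ∈ ℝ^p, and y ∈ ℝ^p, and write q = (y−μ)ᵀ V^{−1} (y−μ) and η_α = (2π)^{−pα/2}(det V)^{−α/2}. Then, as α → 0⁺, the quantity η_α (1+α)^{−p/2} − (1 + 1/α) η_α e^{−(α/2) q} + 1/α converges to (p/2) ln(2π) + (1/2) ln det V + q/2 = −ln φ_{μ,V}(y). In other words, up to the additive constant 1/α, the per-observation density power divergence objective for the Gaussian model converges to the negative log-likelihood as α → 0⁺, so the minimum density power divergence estimator at α = 0 is the maximum likelihood estimator. -/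
/-! With `L = (p/2) log 2π + (1/2) log det V` and `M = L + q/2`, the normalising constant is
`η_α = e^{-αL}` and `η_α e^{-αq/2} = e^{-αM}`, so the objective plus `1/α` equals
`(e^{-αL}(1+α)^{-p/2} - e^{-αM}) + (1 - e^{-αM})/α`. The first bracket tends to `1 - 1 = 0`
and the second is a difference quotient of `α ↦ -e^{-αM}` at `0`, which tends to `M`.
Finally `M = -log φ_{μ,V}(y)` by taking logarithms in the density. -/

open Matrix MeasureTheory

/-- The multivariate normal density `φ_{μ,V}(y)` on `ℝ^p`. -/
noncomputable def gaussianPdf {p : ℕ} (V : Matrix (Fin p) (Fin p) ℝ) (μ : Fin p → ℝ)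
    (y : Fin p → ℝ) : ℝ :=
  (2 * Real.pi) ^ (-(p : ℝ) / 2) * V.det ^ (-(1 : ℝ) / 2) *
    Real.exp (-(1 / 2 : ℝ) * ((y - μ) ⬝ᵥ (V⁻¹ *ᵥ (y - μ))))

open Real Filter Topology

lemma tendsto_one_sub_exp_neg_mul_div (c : ℝ) :
    Tendsto (fun x : ℝ => (1 - exp (-(x * c))) / x) (𝓝[≠] 0) (𝓝 c) := by
  have hderiv : HasDerivAt (fun x : ℝ => -exp (-(x * c))) c 0 := by
    simpa using (((hasDerivAt_id (0 : ℝ)).mul_const c).fun_neg.exp).fun_neg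
  refine hderiv.tendsto_slope_zero.congr fun x => ?_
  simp only [zero_add, zero_mul, neg_zero, exp_zero, smul_eq_mul]
  ring

lemma tendsto_sub_one_add_one_div_mul_exp_add_one_div {f : ℝ → ℝ}
    (hf : Tendsto f (𝓝[≠] 0) (𝓝 1)) (c : ℝ) :
    Tendsto (fun x => f x - (1 + 1 / x) * exp (-(x * c)) + 1 / x) (𝓝[≠] 0) (𝓝 c) := by
  have hexp : Tendsto (fun x : ℝ => exp (-(x * c))) (𝓝[≠] 0) (𝓝 1) := by
    have : Continuous fun x : ℝ => exp (-(x * c)) := by fun_prop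
    simpa using (this.tendsto 0).mono_left nhdsWithin_le_nhds
  have hsum := (hf.sub hexp).add (tendsto_one_sub_exp_neg_mul_div c)
  rw [sub_self, zero_add] at hsum
  refine hsum.congr' ?_
  filter_upwards [self_mem_nhdsWithin] with x hx
  field_simp [hx]
  ring

lemma tendsto_exp_neg_mul_mul_one_add_rpow (L r : ℝ) :
    Tendsto (fun x : ℝ => exp (-(x * L)) * (1 + x) ^ r) (𝓝[≠] 0) (𝓝 1) := by
  have hcont : ContinuousAt (fun x : ℝ => exp (-(x * L)) * (1 + x) ^ r) 0 :=
    (by fun_prop : Continuous fun x : ℝ => exp (-(x * L))).continuousAt.mul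
      ((continuousAt_const.add continuousAt_id).rpow_const (Or.inl (by norm_num)))
  simpa using hcont.tendsto.mono_left nhdsWithin_le_nhds

lemma rpow_mul_rpow_eq_exp_neg_mul {a d : ℝ} (ha : 0 < a) (hd : 0 < d) (s α : ℝ) :
    a ^ (-s * α / 2) * d ^ (-α / 2) = exp (-(α * (s / 2 * log a + 1 / 2 * log d))) := by
  rw [rpow_def_of_pos ha, rpow_def_of_pos hd, ← exp_add]
  ring_nf

lemma neg_log_gaussianPdf {p : ℕ} {V : Matrix (Fin p) (Fin p) ℝ} (hV : 0 < V.det)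
    (μ y : Fin p → ℝ) :
    -log (gaussianPdf V μ y) = (p : ℝ) / 2 * log (2 * π) + 1 / 2 * log V.det
      + ((y - μ) ⬝ᵥ (V⁻¹ *ᵥ (y - μ))) / 2 := by
  have h2π : (2 * π) ^ (-(p : ℝ) / 2) ≠ 0 := (rpow_pos_of_pos (by positivity) _).ne'
  have hdet : V.det ^ (-(1 : ℝ) / 2) ≠ 0 := (rpow_pos_of_pos hV _).ne'
  rw [gaussianPdf, log_mul (mul_ne_zero h2π hdet) (exp_ne_zero _), log_mul h2π hdet,
    log_rpow (by positivity), log_rpow hV, log_exp]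
  ring

theorem dpd_gaussian_objective_tendsto_neg_loglik_general {p : ℕ}
    (V : Matrix (Fin p) (Fin p) ℝ) (hVpd : V.PosDef)
    (μ y : Fin p → ℝ) :
    Filter.Tendsto
      (fun α : ℝ =>
        ((2 * Real.pi) ^ (-(p : ℝ) * α / 2) * V.det ^ (-α / 2)) * (1 + α) ^ (-(p : ℝ) / 2)
          - (1 + 1 / α) * ((2 * Real.pi) ^ (-(p : ℝ) * α / 2) * V.det ^ (-α / 2)) *
              Real.exp (-(α / 2) * ((y - μ) ⬝ᵥ (V⁻¹ *ᵥ (y - μ))))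
          + 1 / α)
      (nhdsWithin 0 (Set.Ioi 0))
      (nhds ((p : ℝ) / 2 * Real.log (2 * Real.pi) + (1 / 2) * Real.log V.det
              + ((y - μ) ⬝ᵥ (V⁻¹ *ᵥ (y - μ))) / 2)) ∧
    (p : ℝ) / 2 * Real.log (2 * Real.pi) + (1 / 2) * Real.log V.det
        + ((y - μ) ⬝ᵥ (V⁻¹ *ᵥ (y - μ))) / 2
      = - Real.log (gaussianPdf V μ y) := by
  have hdet : 0 < V.det := hVpd.det_pos
  set q := (y - μ) ⬝ᵥ (V⁻¹ *ᵥ (y - μ))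
  set L := (p : ℝ) / 2 * log (2 * π) + 1 / 2 * log V.det
  refine ⟨?_, (neg_log_gaussianPdf hdet μ y).symm⟩
  have hlim := (tendsto_sub_one_add_one_div_mul_exp_add_one_div
    (tendsto_exp_neg_mul_mul_one_add_rpow L (-(p : ℝ) / 2)) (L + q / 2)).mono_left
    (nhdsGT_le_nhdsNE 0)
  refine hlim.congr fun α => ?_
  rw [rpow_mul_rpow_eq_exp_neg_mul two_pi_pos hdet, mul_assoc _ (exp _), ← exp_add]
  simp only [L]
  ring_nf

/-- with `q = (y−μ)ᵀV⁻¹(y−μ)` and `η_α = (2π)^{−pα/2}(det V)^{−α/2}`,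
the quantity `η_α(1+α)^{−p/2} − (1+1/α) η_α e^{−(α/2)q} + 1/α` converges, as `α → 0⁺`,
to `(p/2)ln(2π) + (1/2)ln det V + q/2`, which equals `−ln φ_{μ,V}(y)`:
the per-observation DPD objective converges to the negative log-likelihood. -/
theorem dpd_gaussian_objective_tendsto_neg_loglik {p : ℕ}
    (V : Matrix (Fin p) (Fin p) ℝ) (hVsymm : V.IsSymm) (hVpd : V.PosDef)
    (μ y : Fin p → ℝ) :
    Filter.Tendsto
      (fun α : ℝ =>
        ((2 * Real.pi) ^ (-(p : ℝ) * α / 2) * V.det ^ (-α / 2)) * (1 + α) ^ (-(p : ℝ) / 2)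
          - (1 + 1 / α) * ((2 * Real.pi) ^ (-(p : ℝ) * α / 2) * V.det ^ (-α / 2)) *
              Real.exp (-(α / 2) * ((y - μ) ⬝ᵥ (V⁻¹ *ᵥ (y - μ))))
          + 1 / α)
      (nhdsWithin 0 (Set.Ioi 0))
      (nhds ((p : ℝ) / 2 * Real.log (2 * Real.pi) + (1 / 2) * Real.log V.det
              + ((y - μ) ⬝ᵥ (V⁻¹ *ᵥ (y - μ))) / 2)) ∧
    (p : ℝ) / 2 * Real.log (2 * Real.pi) + (1 / 2) * Real.log V.det
        + ((y - μ) ⬝ᵥ (V⁻¹ *ᵥ (y - μ))) / 2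
      = - Real.log (gaussianPdf V μ y) :=
  dpd_gaussian_objective_tendsto_neg_loglik_general V hVpd μ y
end

section
/- Let V be a symmetric positive definite real p×p matrix, μ ∈ ℝ^p, α ≥ 0, and B any real p×p matrix. Then ∫_{ℝ^p} φ_{μ,V}(y)^{1+α} · (y−μ)ᵀ B (y−μ) dy = (2π)^{−pα/2} (det V)^{−α/2} (1+α)^{−p/2−1} · Tr(V B). -/
/-!
Raising `φ_{μ,V}` to the power `1 + α` gives `((2π)^{-p/2} (det V)^{-1/2})^{1+α}` times the
unnormalised Gaussian weight of covariance `W = V / (1 + α)`. Writing `W = Sᵀ S`, the substitution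
`z = Sᵀ x` turns `exp (-zᵀ W⁻¹ z / 2)` into the standard weight `exp (-|x|²/2)` and `zᵀ B z` into
`xᵀ (S B Sᵀ) x`, with Jacobian `|det S| = √(det W)`. The coordinates of the standard Gaussian are
uncorrelated with unit variance, so `∫ exp (-|x|²/2) xᵀ M x dx = (2π)^{p/2} tr M`, and
`tr (S B Sᵀ) = tr (W B)`.
-/

open Matrix MeasureTheory

open Real ProbabilityTheory

lemma integral_mul_exp_neg_half_sq_eq_integral_gaussianReal (f : ℝ → ℝ) :
    ∫ t, f t * exp (-(1 / 2) * t ^ 2) = √(2 * π) * ∫ t, f t ∂gaussianReal 0 1 := by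
  rw [integral_gaussianReal_eq_integral_smul one_ne_zero, ← integral_const_mul]
  congr 1 with t
  simp only [gaussianPDFReal, NNReal.coe_one, mul_one, sub_zero, smul_eq_mul]
  rw [mul_assoc, mul_inv_cancel_left₀ (by positivity), mul_comm]
  congr 2
  ring

lemma integral_exp_neg_half_sq : ∫ t : ℝ, exp (-(1 / 2) * t ^ 2) = √(2 * π) := by
  simpa using integral_mul_exp_neg_half_sq_eq_integral_gaussianReal 1

lemma integral_mul_exp_neg_half_sq : ∫ t : ℝ, t * exp (-(1 / 2) * t ^ 2) = 0 := by
  simpa using integral_mul_exp_neg_half_sq_eq_integral_gaussianReal id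

lemma integral_sq_mul_exp_neg_half_sq : ∫ t : ℝ, t ^ 2 * exp (-(1 / 2) * t ^ 2) = √(2 * π) := by
  have hvar := variance_fun_id_gaussianReal (μ := 0) (v := 1)
  rw [variance_eq_integral measurable_id'.aemeasurable] at hvar
  simp only [integral_id_gaussianReal, sub_zero, NNReal.coe_one] at hvar
  rw [integral_mul_exp_neg_half_sq_eq_integral_gaussianReal, hvar, mul_one]

lemma integrable_pow_mul_exp_neg_half_sq (n : ℕ) :
    Integrable fun t : ℝ ↦ t ^ n * exp (-(1 / 2) * t ^ 2) := by
  simpa using integrable_rpow_mul_exp_neg_mul_sq (b := 1 / 2) (by norm_num) (s := n)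
    (by linarith [n.cast_nonneg (α := ℝ)])

lemma dotProduct_transpose_mulVec_mulVec {R m n : Type*} [CommSemiring R] [Fintype m] [Fintype n]
    (S : Matrix m n R) (A : Matrix n n R) (x : m → R) :
    (Sᵀ *ᵥ x) ⬝ᵥ (A *ᵥ (Sᵀ *ᵥ x)) = x ⬝ᵥ ((S * A * Sᵀ) *ᵥ x) := by
  rw [mulVec_mulVec, mulVec_transpose, ← dotProduct_mulVec, mulVec_mulVec, Matrix.mul_assoc]

section Gaussian

variable {ι : Type*} [Fintype ι]

lemma mul_mul_exp_neg_half_dotProduct_eq_prod [DecidableEq ι] (x : ι → ℝ) (i j : ι) :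
    x i * x j * exp (-(1 / 2) * (x ⬝ᵥ x)) =
      ∏ k, x k ^ ((if k = i then 1 else 0) + (if k = j then 1 else 0)) *
        exp (-(1 / 2) * x k ^ 2) := by
  rw [Finset.prod_mul_distrib, ← exp_sum, dotProduct, Finset.mul_sum]
  simp only [pow_add, Finset.prod_mul_distrib, pow_ite, pow_one, pow_zero, Finset.prod_ite_eq',
    Finset.mem_univ, if_true, sq]

lemma integrable_mul_mul_exp_neg_half_dotProduct (i j : ι) :
    Integrable fun x : ι → ℝ ↦ x i * x j * exp (-(1 / 2) * (x ⬝ᵥ x)) := by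
  classical
  simp_rw [mul_mul_exp_neg_half_dotProduct_eq_prod _ i j]
  exact Integrable.fintype_prod fun k ↦ integrable_pow_mul_exp_neg_half_sq _

lemma integral_mul_mul_exp_neg_half_dotProduct [DecidableEq ι] (i j : ι) :
    ∫ x : ι → ℝ, x i * x j * exp (-(1 / 2) * (x ⬝ᵥ x)) =
      if i = j then √(2 * π) ^ Fintype.card ι else 0 := by
  simp_rw [mul_mul_exp_neg_half_dotProduct_eq_prod _ i j]
  rw [integral_fintype_prod_volume_eq_prod
    (f := fun k t ↦ t ^ ((if k = i then 1 else 0) + (if k = j then 1 else 0)) *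
      exp (-(1 / 2) * t ^ 2))]
  split_ifs with hij
  · subst hij
    rw [← Finset.card_univ, ← Finset.prod_const]
    refine Finset.prod_congr rfl fun k _ ↦ ?_
    split_ifs
    · exact integral_sq_mul_exp_neg_half_sq
    · simpa using integral_exp_neg_half_sq
  · refine Finset.prod_eq_zero (Finset.mem_univ i) ?_
    simpa [hij, Ne.symm hij] using integral_mul_exp_neg_half_sq

lemma integral_exp_neg_half_dotProduct_mul_quadForm (M : Matrix ι ι ℝ) :
    ∫ x : ι → ℝ, exp (-(1 / 2) * (x ⬝ᵥ x)) * (x ⬝ᵥ (M *ᵥ x)) =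
      √(2 * π) ^ Fintype.card ι * M.trace := by
  classical
  have hexpand : ∀ x : ι → ℝ, exp (-(1 / 2) * (x ⬝ᵥ x)) * (x ⬝ᵥ (M *ᵥ x)) =
      ∑ i, ∑ j, M i j * (x i * x j * exp (-(1 / 2) * (x ⬝ᵥ x))) := by
    intro x
    simp only [dotProduct, mulVec, Finset.mul_sum]
    exact Finset.sum_congr rfl fun i _ ↦ Finset.sum_congr rfl fun j _ ↦ by ring
  have hint : ∀ i j, Integrable fun x : ι → ℝ ↦ M i j * (x i * x j * exp (-(1 / 2) * (x ⬝ᵥ x))) :=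
    fun i j ↦ (integrable_mul_mul_exp_neg_half_dotProduct i j).const_mul _
  calc ∫ x : ι → ℝ, exp (-(1 / 2) * (x ⬝ᵥ x)) * (x ⬝ᵥ (M *ᵥ x))
      = ∑ i, ∑ j, M i j * ∫ x : ι → ℝ, x i * x j * exp (-(1 / 2) * (x ⬝ᵥ x)) := by
        simp_rw [hexpand]
        rw [integral_finsetSum _ fun i _ ↦ integrable_finsetSum _ fun j _ ↦ hint i j]
        simp_rw [integral_finsetSum _ fun j _ ↦ hint _ j, integral_const_mul]
    _ = √(2 * π) ^ Fintype.card ι * M.trace := by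
        simp_rw [integral_mul_mul_exp_neg_half_dotProduct, mul_ite, mul_zero, Finset.sum_ite_eq,
          Finset.mem_univ, if_true, trace, diag, Finset.mul_sum, mul_comm]

variable [DecidableEq ι]

lemma integral_comp_mulVec {E : Type*} [NormedAddCommGroup E] [NormedSpace ℝ E]
    {T : Matrix ι ι ℝ} (hT : T.det ≠ 0) (f : (ι → ℝ) → E) :
    ∫ x, f (T *ᵥ x) = |T.det|⁻¹ • ∫ y, f y := by
  have hT' : MeasurableEmbedding (toLin' T) :=
    (LinearMap.isClosedEmbedding_of_injective (LinearMap.ker_eq_bot.mpr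
      (mulVec_injective_of_det_ne_zero hT))).measurableEmbedding
  simp_rw [← toLin'_apply]
  rw [← hT'.integral_map, Real.map_matrix_volume_pi_eq_smul_volume_pi hT, integral_smul_measure,
    ENNReal.toReal_ofReal (by positivity), abs_inv]

open scoped MatrixOrder in
lemma integral_exp_neg_half_quadForm_inv_mul_quadForm {V : Matrix ι ι ℝ} (hV : V.PosDef)
    (B : Matrix ι ι ℝ) :
    ∫ z : ι → ℝ, exp (-(1 / 2) * (z ⬝ᵥ (V⁻¹ *ᵥ z))) * (z ⬝ᵥ (B *ᵥ z)) =
      √(2 * π) ^ Fintype.card ι * √V.det * (V * B).trace := by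
  obtain ⟨S, rfl⟩ := CStarAlgebra.nonneg_iff_eq_star_mul_self.mp hV.posSemidef.nonneg
  rw [star_eq_conjTranspose, conjTranspose_eq_transpose_of_trivial] at hV ⊢
  have hS : S.det ≠ 0 := by
    intro h
    simpa [det_mul, h] using hV.det_pos
  have hid : S * (Sᵀ * S)⁻¹ * Sᵀ = 1 := by
    rw [Matrix.mul_inv_rev, ← Matrix.mul_assoc, mul_nonsing_inv _ hS.isUnit, Matrix.one_mul,
      nonsing_inv_mul _ (by simpa using hS.isUnit)]
  have hsubst := integral_comp_mulVec (T := Sᵀ) (by simpa using hS)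
    fun z ↦ exp (-(1 / 2) * (z ⬝ᵥ ((Sᵀ * S)⁻¹ *ᵥ z))) * (z ⬝ᵥ (B *ᵥ z))
  simp only [dotProduct_transpose_mulVec_mulVec, hid, one_mulVec,
    integral_exp_neg_half_dotProduct_mul_quadForm, det_transpose, smul_eq_mul] at hsubst
  rw [eq_inv_mul_iff_mul_eq₀ (abs_ne_zero.mpr hS)] at hsubst
  rw [← hsubst, trace_mul_cycle, det_mul, det_transpose, sqrt_mul_self_eq_abs]
  ring

end Gaussian

lemma gaussianPdf_rpow {p : ℕ} {V : Matrix (Fin p) (Fin p) ℝ} (hV : 0 < V.det) (μ y : Fin p → ℝ)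
    (s : ℝ) :
    gaussianPdf V μ y ^ s = ((2 * π) ^ (-(p : ℝ) / 2) * V.det ^ (-(1 : ℝ) / 2)) ^ s *
      exp (-(1 / 2) * (s * ((y - μ) ⬝ᵥ (V⁻¹ *ᵥ (y - μ))))) := by
  rw [gaussianPdf, mul_rpow (by positivity) (exp_pos _).le, ← exp_mul]
  congr 2
  ring

lemma rpow_mul_sqrt_mul_sqrt_inv_pow_mul (p : ℕ) {a d α : ℝ} (ha : 0 < a) (hd : 0 < d)
    (hα : 0 < 1 + α) (t : ℝ) :
    (a ^ (-(p : ℝ) / 2) * d ^ (-(1 : ℝ) / 2)) ^ (1 + α) *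
        (√a ^ p * √((1 + α)⁻¹ ^ p * d) * ((1 + α)⁻¹ * t)) =
      a ^ (-(p : ℝ) * α / 2) * d ^ (-α / 2) * (1 + α) ^ (-(p : ℝ) / 2 - 1) * t := by
  have hsa : √a ^ p = a ^ ((p : ℝ) / 2) := by
    rw [sqrt_eq_rpow, ← rpow_natCast, ← rpow_mul ha.le]
    ring_nf
  have hsd : √((1 + α)⁻¹ ^ p * d) = (1 + α) ^ (-(p : ℝ) / 2) * d ^ (1 / 2 : ℝ) := by
    rw [sqrt_eq_rpow, mul_rpow (by positivity) hd.le, ← rpow_natCast, ← rpow_mul (by positivity),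
      inv_rpow hα.le, ← rpow_neg hα.le]
    ring_nf
  have ea : a ^ (-(p : ℝ) / 2 * (1 + α)) * a ^ ((p : ℝ) / 2) = a ^ (-(p : ℝ) * α / 2) := by
    rw [← rpow_add ha]
    ring_nf
  have ed : d ^ (-(1 : ℝ) / 2 * (1 + α)) * d ^ (1 / 2 : ℝ) = d ^ (-α / 2) := by
    rw [← rpow_add hd]
    ring_nf
  have eα : (1 + α) ^ (-(p : ℝ) / 2) * (1 + α) ^ (-1 : ℝ) = (1 + α) ^ (-(p : ℝ) / 2 - 1) := by
    rw [← rpow_add hα]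
    ring_nf
  rw [mul_rpow (by positivity) (by positivity), ← rpow_mul ha.le, ← rpow_mul hd.le, hsa, hsd,
    ← rpow_neg_one (1 + α), ← ea, ← ed, ← eα]
  ring

theorem integral_gaussianPdf_rpow_quadForm_general {p : ℕ}
    (V : Matrix (Fin p) (Fin p) ℝ) (hVpd : V.PosDef)
    (μ : Fin p → ℝ) (α : ℝ) (hα : 0 ≤ α) (B : Matrix (Fin p) (Fin p) ℝ) :
    ∫ y : Fin p → ℝ, gaussianPdf V μ y ^ (1 + α) * ((y - μ) ⬝ᵥ (B *ᵥ (y - μ))) =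
      (2 * Real.pi) ^ (-(p : ℝ) * α / 2) * V.det ^ (-α / 2) *
        (1 + α) ^ (-(p : ℝ) / 2 - 1) * (V * B).trace := by
  have hα' : 0 < 1 + α := by linarith
  have hdet : 0 < V.det := hVpd.det_pos
  set W := (1 + α)⁻¹ • V
  have hW : W.PosDef := hVpd.smul (inv_pos.mpr hα')
  have hWinv : W⁻¹ = (1 + α) • V⁻¹ :=
    inv_eq_left_inv (by rw [smul_mul_smul, mul_inv_cancel₀ hα'.ne',
      nonsing_inv_mul _ hdet.ne'.isUnit, one_smul])
  calc ∫ y : Fin p → ℝ, gaussianPdf V μ y ^ (1 + α) * ((y - μ) ⬝ᵥ (B *ᵥ (y - μ)))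
      = ((2 * π) ^ (-(p : ℝ) / 2) * V.det ^ (-(1 : ℝ) / 2)) ^ (1 + α) *
          ∫ z : Fin p → ℝ, exp (-(1 / 2) * (z ⬝ᵥ (W⁻¹ *ᵥ z))) * (z ⬝ᵥ (B *ᵥ z)) := by
        simp_rw [gaussianPdf_rpow hdet, hWinv, smul_mulVec, dotProduct_smul, smul_eq_mul, mul_assoc]
        rw [integral_const_mul, integral_sub_right_eq_self
          (fun z ↦ exp (-(1 / 2) * ((1 + α) * (z ⬝ᵥ (V⁻¹ *ᵥ z)))) * (z ⬝ᵥ (B *ᵥ z))) μ]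
    _ = _ := by
        rw [integral_exp_neg_half_quadForm_inv_mul_quadForm hW, det_smul, smul_mul, trace_smul,
          Fintype.card_fin, smul_eq_mul, rpow_mul_sqrt_mul_sqrt_inv_pow_mul p (by positivity) hdet hα']

/-- for any `p×p` matrix `B`,
`∫ φ_{μ,V}(y)^{1+α} (y−μ)ᵀ B (y−μ) dy = (2π)^{−pα/2}(det V)^{−α/2}(1+α)^{−p/2−1} Tr(VB)`. -/
theorem integral_gaussianPdf_rpow_quadForm {p : ℕ}
    (V : Matrix (Fin p) (Fin p) ℝ) (hVsymm : V.IsSymm) (hVpd : V.PosDef)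
    (μ : Fin p → ℝ) (α : ℝ) (hα : 0 ≤ α) (B : Matrix (Fin p) (Fin p) ℝ) :
    ∫ y : Fin p → ℝ, gaussianPdf V μ y ^ (1 + α) * ((y - μ) ⬝ᵥ (B *ᵥ (y - μ))) =
      (2 * Real.pi) ^ (-(p : ℝ) * α / 2) * V.det ^ (-α / 2) *
        (1 + α) ^ (-(p : ℝ) / 2 - 1) * (V * B).trace :=
  integral_gaussianPdf_rpow_quadForm_general V hVpd μ α hα B
end

section
/- Let V be a symmetric positive definite real p×p matrix, μ ∈ ℝ^p, α > 0, and U a symmetric real p×p matrix, and write η_α = (2π)^{−pα/2}(det V)^{−α/2}. Then the per-observation MDPDE estimating function for a variance component is unbiased at the true parameter: ∫_{ℝ^p} φ_{μ,V}(y) · { −(α/2) η_α (1+α)^{−p/2} Tr(V^{−1}U) + (α/2)(1 + 1/α) η_α e^{−(α/2)(y−μ)ᵀV^{−1}(y−μ)} [ Tr(V^{−1}U) − (y−μ)ᵀ V^{−1} U V^{−1} (y−μ) ] } dy = 0. -/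
/-! Write `V = A Aᵀ` and substitute `y = μ + A z`. This turns `φ_{μ,V}(y) e^{-(α/2)(y-μ)ᵀV⁻¹(y-μ)}`
into a multiple of the standard Gaussian kernel `e^{-c zᵀz}` with `c = (1 + α)/2`, whose integral
factors over the coordinates. Hence `∫ φ e^{-(α/2)Q} = (1 + α)^{-p/2}`, and, since the coordinates
are uncorrelated with variance `1/(2c)`,
`∫ φ e^{-(α/2)Q} (y-μ)ᵀM(y-μ) = (1 + α)^{-p/2} Tr(MV)/(1 + α)`.
For `M = V⁻¹UV⁻¹` we have `Tr(MV) = Tr(V⁻¹U)`, and the two terms of the estimating function cancel: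
`(α/2)(1 + 1/α) · (1 - 1/(1 + α)) = α/2`. -/

open Matrix MeasureTheory

open Real

theorem integral_mul_exp_neg_mul_sq_eq_zero (b : ℝ) : ∫ x : ℝ, x * exp (-b * x ^ 2) = 0 := by
  have h := integral_neg_eq_self (fun x : ℝ => x * exp (-b * x ^ 2)) volume
  simp only [neg_sq, neg_mul, integral_neg] at h
  simp only [neg_mul]
  linarith

theorem integral_sq_mul_exp_neg_mul_sq {b : ℝ} (hb : 0 < b) :
    ∫ x : ℝ, x ^ 2 * exp (-b * x ^ 2) = √(π / b) / (2 * b) := by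
  have h_even : ∫ x : ℝ, x ^ 2 * exp (-b * x ^ 2)
      = 2 * ∫ x in Set.Ioi 0, x ^ 2 * exp (-b * x ^ 2) := by
    rw [← integral_comp_abs (f := fun x => x ^ 2 * exp (-b * x ^ 2))]
    simp only [sq_abs]
  have h_half := integral_rpow_mul_exp_neg_mul_rpow (p := 2) (q := 2) two_pos (by norm_num) hb
  simp only [rpow_two] at h_half
  rw [h_even, h_half, show ((2 : ℝ) + 1) / 2 = 1 / 2 + 1 by norm_num, Gamma_add_one (by norm_num),
    Gamma_one_half_eq, show -((2 : ℝ) + 1) / 2 = -(1 + 1 / 2) by norm_num, rpow_neg hb.le,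
    rpow_add hb, rpow_one, ← sqrt_eq_rpow, sqrt_div' _ hb.le]
  field_simp

theorem integrable_pow_mul_exp_neg_mul_sq {b : ℝ} (hb : 0 < b) (n : ℕ) :
    Integrable fun x : ℝ => x ^ n * exp (-b * x ^ 2) := by
  simpa only [rpow_natCast] using
    integrable_rpow_mul_exp_neg_mul_sq hb (s := n) (by linarith [n.cast_nonneg (α := ℝ)])

section

variable {ι : Type*} [Fintype ι]

theorem exp_neg_mul_dotProduct_self_mul_prod_pow (c : ℝ) (m : ι → ℕ) (z : ι → ℝ) :
    exp (-c * (z ⬝ᵥ z)) * ∏ k, z k ^ m k = ∏ k, z k ^ m k * exp (-c * z k ^ 2) := by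
  simp only [dotProduct, Finset.mul_sum, exp_sum, Finset.prod_mul_distrib, sq, mul_comm]

theorem integral_exp_neg_mul_dotProduct_self_mul_prod_pow (c : ℝ) (m : ι → ℕ) :
    ∫ z : ι → ℝ, exp (-c * (z ⬝ᵥ z)) * ∏ k, z k ^ m k
      = ∏ k, ∫ x : ℝ, x ^ m k * exp (-c * x ^ 2) := by
  simp_rw [exp_neg_mul_dotProduct_self_mul_prod_pow]
  exact integral_fintype_prod_eq_prod (fun k x => x ^ m k * exp (-c * x ^ 2))

theorem integrable_exp_neg_mul_dotProduct_self_mul_prod_pow {c : ℝ} (hc : 0 < c) (m : ι → ℕ) :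
    Integrable fun z : ι → ℝ => exp (-c * (z ⬝ᵥ z)) * ∏ k, z k ^ m k := by
  simp_rw [exp_neg_mul_dotProduct_self_mul_prod_pow]
  exact Integrable.fintype_prod (f := fun k x => x ^ m k * exp (-c * x ^ 2))
    fun k => integrable_pow_mul_exp_neg_mul_sq hc (m k)

theorem integral_exp_neg_mul_dotProduct_self (c : ℝ) :
    ∫ z : ι → ℝ, exp (-c * (z ⬝ᵥ z)) = √(π / c) ^ Fintype.card ι := by
  simpa only [Pi.zero_apply, pow_zero, Finset.prod_const_one, mul_one, one_mul, integral_gaussian,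
    Finset.prod_const, Finset.card_univ]
    using integral_exp_neg_mul_dotProduct_self_mul_prod_pow c (0 : ι → ℕ)

theorem prod_pow_single_add_single [DecidableEq ι] (i j : ι) (z : ι → ℝ) :
    ∏ k, z k ^ (Pi.single i 1 + Pi.single j 1 : ι → ℕ) k = z i * z j := by
  simp only [Pi.add_apply, pow_add, Finset.prod_mul_distrib]
  simp [Pi.single_apply, pow_ite]

theorem dotProduct_mulVec_eq_sum (N : Matrix ι ι ℝ) (z : ι → ℝ) :
    z ⬝ᵥ (N *ᵥ z) = ∑ i, ∑ j, N i j * (z i * z j) := by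
  simp only [dotProduct, mulVec, Finset.mul_sum]
  exact Finset.sum_congr rfl fun i _ => Finset.sum_congr rfl fun j _ => by ring

theorem exp_neg_mul_dotProduct_self_mul_quadForm (c : ℝ) (N : Matrix ι ι ℝ) (z : ι → ℝ) :
    exp (-c * (z ⬝ᵥ z)) * (z ⬝ᵥ (N *ᵥ z))
      = ∑ i, ∑ j, N i j * (exp (-c * (z ⬝ᵥ z)) * (z i * z j)) := by
  simp only [dotProduct_mulVec_eq_sum, Finset.mul_sum]
  exact Finset.sum_congr rfl fun i _ => Finset.sum_congr rfl fun j _ => by ring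

variable [DecidableEq ι]

theorem integrable_exp_neg_mul_dotProduct_self_mul_mul {c : ℝ} (hc : 0 < c) (i j : ι) :
    Integrable fun z : ι → ℝ => exp (-c * (z ⬝ᵥ z)) * (z i * z j) := by
  simp_rw [← prod_pow_single_add_single i j]
  exact integrable_exp_neg_mul_dotProduct_self_mul_prod_pow hc _

theorem integral_exp_neg_mul_dotProduct_self_mul_mul {c : ℝ} (hc : 0 < c) (i j : ι) :
    ∫ z : ι → ℝ, exp (-c * (z ⬝ᵥ z)) * (z i * z j)
      = if i = j then √(π / c) ^ Fintype.card ι / (2 * c) else 0 := by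
  simp_rw [← prod_pow_single_add_single i j]
  rw [integral_exp_neg_mul_dotProduct_self_mul_prod_pow]
  split_ifs with hij
  · subst hij
    have h_factor : ∀ k, ∫ x : ℝ, x ^ (Pi.single i 1 + Pi.single i 1 : ι → ℕ) k * exp (-c * x ^ 2)
        = √(π / c) * if k = i then (2 * c)⁻¹ else 1 := by
      intro k
      by_cases hk : k = i
      · subst hk
        rw [if_pos rfl, Pi.add_apply, Pi.single_eq_same, integral_sq_mul_exp_neg_mul_sq hc,
          div_eq_mul_inv]
      · simp only [if_neg hk, Pi.add_apply, Pi.single_eq_of_ne hk, add_zero, pow_zero, one_mul,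
          mul_one, integral_gaussian]
    simp_rw [h_factor]
    rw [Finset.prod_mul_distrib, Finset.prod_const, Finset.prod_ite_eq' Finset.univ i,
      Finset.card_univ, if_pos (Finset.mem_univ i), ← div_eq_mul_inv]
  · refine Finset.prod_eq_zero (Finset.mem_univ i) ?_
    simp only [Pi.add_apply, Pi.single_eq_same, Pi.single_eq_of_ne hij, add_zero, pow_one]
    exact integral_mul_exp_neg_mul_sq_eq_zero c

theorem integrable_exp_neg_mul_dotProduct_self_mul_quadForm {c : ℝ} (hc : 0 < c)
    (N : Matrix ι ι ℝ) :
    Integrable fun z : ι → ℝ => exp (-c * (z ⬝ᵥ z)) * (z ⬝ᵥ (N *ᵥ z)) := by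
  simp_rw [exp_neg_mul_dotProduct_self_mul_quadForm]
  exact integrable_finsetSum _ fun i _ => integrable_finsetSum _ fun j _ =>
    (integrable_exp_neg_mul_dotProduct_self_mul_mul hc i j).const_mul _

theorem integral_exp_neg_mul_dotProduct_self_mul_quadForm {c : ℝ} (hc : 0 < c)
    (N : Matrix ι ι ℝ) :
    ∫ z : ι → ℝ, exp (-c * (z ⬝ᵥ z)) * (z ⬝ᵥ (N *ᵥ z))
      = √(π / c) ^ Fintype.card ι / (2 * c) * N.trace := by
  have h_int (i j : ι) :=
    (integrable_exp_neg_mul_dotProduct_self_mul_mul hc i j).const_mul (N i j)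
  simp_rw [exp_neg_mul_dotProduct_self_mul_quadForm]
  rw [integral_finsetSum _ fun i _ => integrable_finsetSum _ fun j _ => h_int i j]
  simp_rw [integral_finsetSum _ fun j _ => h_int _ j, integral_const_mul,
    integral_exp_neg_mul_dotProduct_self_mul_mul hc, mul_ite, mul_zero, Finset.sum_ite_eq,
    Finset.mem_univ, if_true, trace, diag, Finset.mul_sum]
  exact Finset.sum_congr rfl fun i _ => mul_comm _ _

section LinearSubstitution

variable {E : Type*} [NormedAddCommGroup E] {A : Matrix ι ι ℝ}

theorem measurableEmbedding_mulVec (hA : IsUnit A.det) : MeasurableEmbedding (A *ᵥ ·) :=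
  (A.toLinearEquiv' (A.invertibleOfIsUnitDet hA)).toContinuousLinearEquiv.toHomeomorph
    |>.measurableEmbedding

theorem map_mulVec_volume (hA : IsUnit A.det) :
    volume.map (A *ᵥ ·) = ENNReal.ofReal |A.det⁻¹| • (volume : Measure (ι → ℝ)) := by
  have h := Measure.map_linearMap_addHaar_pi_eq_smul_addHaar (f := toLin' A)
    (by rw [LinearMap.det_toLin']; exact hA.ne_zero) volume
  rwa [LinearMap.det_toLin'] at h

theorem integral_comp_mulVec_s8 [NormedSpace ℝ E] (hA : IsUnit A.det) (g : (ι → ℝ) → E) :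
    ∫ z, g (A *ᵥ z) = |A.det|⁻¹ • ∫ x, g x := by
  rw [← (measurableEmbedding_mulVec hA).integral_map, map_mulVec_volume hA, integral_smul_measure,
    ENNReal.toReal_ofReal (abs_nonneg _), abs_inv]

theorem integrable_comp_mulVec_iff (hA : IsUnit A.det) (g : (ι → ℝ) → E) :
    Integrable (fun z => g (A *ᵥ z)) ↔ Integrable g := by
  rw [← Function.comp_def, ← (measurableEmbedding_mulVec hA).integrable_map_iff,
    map_mulVec_volume hA, integrable_smul_measure (by simpa using hA.ne_zero) ENNReal.ofReal_ne_top]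

end LinearSubstitution

omit [DecidableEq ι] in
theorem mulVec_dotProduct_mulVec (A M : Matrix ι ι ℝ) (z : ι → ℝ) :
    (A *ᵥ z) ⬝ᵥ (M *ᵥ (A *ᵥ z)) = z ⬝ᵥ ((Aᵀ * M * A) *ᵥ z) := by
  rw [dotProduct_mulVec, dotProduct_mulVec, dotProduct_mulVec, ← vecMul_vecMul, ← vecMul_vecMul,
    vecMul_transpose]

theorem transpose_mul_inv_mul_transpose_mul {A : Matrix ι ι ℝ} (hA : IsUnit A.det) :
    Aᵀ * (A * Aᵀ)⁻¹ * A = 1 := by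
  have hAt : IsUnit Aᵀ.det := by rwa [det_transpose]
  rw [Matrix.mul_inv_rev, ← mul_assoc, mul_nonsing_inv _ hAt, one_mul, nonsing_inv_mul _ hA]

open scoped MatrixOrder in
theorem Matrix.PosDef.exists_eq_mul_transpose {V : Matrix ι ι ℝ} (hV : V.PosDef) :
    ∃ A : Matrix ι ι ℝ, IsUnit A.det ∧ V = A * Aᵀ := by
  obtain ⟨B, hB⟩ := CStarAlgebra.nonneg_iff_eq_star_mul_self.mp hV.posSemidef.nonneg
  have hV_eq : V = Bᵀ * Bᵀᵀ := by
    rwa [transpose_transpose, ← conjTranspose_eq_transpose_of_trivial]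
  refine ⟨Bᵀ, ?_, hV_eq⟩
  have h_det : IsUnit (Bᵀ * Bᵀᵀ).det := hV_eq ▸ (isUnit_iff_isUnit_det V).mp hV.isUnit
  exact isUnit_of_mul_isUnit_left (det_mul Bᵀ Bᵀᵀ ▸ h_det)

section Covariance

variable {V : Matrix ι ι ℝ}

theorem integral_exp_neg_mul_quadForm_inv (hV : V.PosDef) (c : ℝ) :
    ∫ x, exp (-c * (x ⬝ᵥ (V⁻¹ *ᵥ x))) = √V.det * √(π / c) ^ Fintype.card ι := by
  obtain ⟨A, hA, rfl⟩ := hV.exists_eq_mul_transpose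
  have h := integral_comp_mulVec_s8 hA fun x => exp (-c * (x ⬝ᵥ ((A * Aᵀ)⁻¹ *ᵥ x)))
  simp only [mulVec_dotProduct_mulVec, transpose_mul_inv_mul_transpose_mul hA, one_mulVec,
    integral_exp_neg_mul_dotProduct_self, smul_eq_mul] at h
  have h_abs : |A.det| ≠ 0 := abs_ne_zero.mpr hA.ne_zero
  rw [det_mul, det_transpose, ← sq, sqrt_sq_eq_abs, h, mul_inv_cancel_left₀ h_abs]

theorem integrable_exp_neg_mul_quadForm_inv (hV : V.PosDef) {c : ℝ} (hc : 0 < c) :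
    Integrable fun x => exp (-c * (x ⬝ᵥ (V⁻¹ *ᵥ x))) := by
  obtain ⟨A, hA, rfl⟩ := hV.exists_eq_mul_transpose
  refine (integrable_comp_mulVec_iff hA _).mp ?_
  simpa only [mulVec_dotProduct_mulVec, transpose_mul_inv_mul_transpose_mul hA, one_mulVec,
    Pi.zero_apply, pow_zero, Finset.prod_const_one, mul_one]
    using integrable_exp_neg_mul_dotProduct_self_mul_prod_pow hc (0 : ι → ℕ)

theorem integral_exp_neg_mul_quadForm_inv_mul_quadForm (hV : V.PosDef) {c : ℝ} (hc : 0 < c)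
    (M : Matrix ι ι ℝ) :
    ∫ x, exp (-c * (x ⬝ᵥ (V⁻¹ *ᵥ x))) * (x ⬝ᵥ (M *ᵥ x))
      = √V.det * √(π / c) ^ Fintype.card ι / (2 * c) * (M * V).trace := by
  obtain ⟨A, hA, rfl⟩ := hV.exists_eq_mul_transpose
  have h := integral_comp_mulVec_s8 hA fun x =>
    exp (-c * (x ⬝ᵥ ((A * Aᵀ)⁻¹ *ᵥ x))) * (x ⬝ᵥ (M *ᵥ x))
  simp only [mulVec_dotProduct_mulVec, transpose_mul_inv_mul_transpose_mul hA, one_mulVec,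
    integral_exp_neg_mul_dotProduct_self_mul_quadForm hc, smul_eq_mul] at h
  have h_abs : |A.det| ≠ 0 := abs_ne_zero.mpr hA.ne_zero
  rw [trace_mul_cycle, trace_mul_comm] at h
  rw [det_mul, det_transpose, ← sq, sqrt_sq_eq_abs, mul_div_assoc, mul_assoc, h,
    mul_inv_cancel_left₀ h_abs]

theorem integrable_exp_neg_mul_quadForm_inv_mul_quadForm (hV : V.PosDef) {c : ℝ} (hc : 0 < c)
    (M : Matrix ι ι ℝ) :
    Integrable fun x => exp (-c * (x ⬝ᵥ (V⁻¹ *ᵥ x))) * (x ⬝ᵥ (M *ᵥ x)) := by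
  obtain ⟨A, hA, rfl⟩ := hV.exists_eq_mul_transpose
  refine (integrable_comp_mulVec_iff hA _).mp ?_
  simpa only [mulVec_dotProduct_mulVec, transpose_mul_inv_mul_transpose_mul hA, one_mulVec]
    using integrable_exp_neg_mul_dotProduct_self_mul_quadForm hc (Aᵀ * M * A)

end Covariance

end

theorem two_mul_pi_rpow_mul_sqrt_pi_div_pow {c : ℝ} (hc : 0 < c) (p : ℕ) :
    (2 * π) ^ (-(p : ℝ) / 2) * √(π / c) ^ p = (2 * c) ^ (-(p : ℝ) / 2) := by
  have h2π : 0 < 2 * π := by positivity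
  have h_sqrt : √(π / c) ^ p = (π / c) ^ ((p : ℝ) / 2) := by
    rw [sqrt_eq_rpow, ← rpow_natCast, ← rpow_mul (by positivity)]
    ring_nf
  rw [h_sqrt, neg_div, rpow_neg h2π.le, rpow_neg (by positivity), ← div_eq_inv_mul,
    ← div_rpow (by positivity) h2π.le, ← inv_rpow (by positivity)]
  congr 1
  field_simp

theorem two_mul_pi_rpow_mul_rpow_mul_sqrt_mul_sqrt_pi_div_pow {d c : ℝ} (hd : 0 < d) (hc : 0 < c)
    (p : ℕ) :
    (2 * π) ^ (-(p : ℝ) / 2) * d ^ (-(1 : ℝ) / 2) * (√d * √(π / c) ^ p)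
      = (2 * c) ^ (-(p : ℝ) / 2) := by
  have h_det : d ^ (-(1 : ℝ) / 2) * √d = 1 := by
    rw [sqrt_eq_rpow, ← rpow_add hd]
    norm_num
  calc _ = (2 * π) ^ (-(p : ℝ) / 2) * √(π / c) ^ p * (d ^ (-(1 : ℝ) / 2) * √d) := by ring
    _ = _ := by rw [h_det, mul_one, two_mul_pi_rpow_mul_sqrt_pi_div_pow hc]

section GaussianPdf

variable {p : ℕ} {V : Matrix (Fin p) (Fin p) ℝ} {α : ℝ}

theorem gaussianPdf_mul_exp (μ y : Fin p → ℝ) :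
    gaussianPdf V μ y * exp (-(α / 2) * ((y - μ) ⬝ᵥ (V⁻¹ *ᵥ (y - μ))))
      = (2 * π) ^ (-(p : ℝ) / 2) * V.det ^ (-(1 : ℝ) / 2) *
          exp (-((1 + α) / 2) * ((y - μ) ⬝ᵥ (V⁻¹ *ᵥ (y - μ)))) := by
  rw [gaussianPdf, mul_assoc, ← exp_add]
  ring_nf

theorem integrable_gaussianPdf_mul_exp (hV : V.PosDef) (μ : Fin p → ℝ) (hα : -1 < α) :
    Integrable fun y => gaussianPdf V μ y * exp (-(α / 2) * ((y - μ) ⬝ᵥ (V⁻¹ *ᵥ (y - μ)))) := by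
  simp_rw [gaussianPdf_mul_exp]
  exact ((integrable_exp_neg_mul_quadForm_inv hV (by linarith)).comp_sub_right μ).const_mul _

theorem integral_gaussianPdf_mul_exp (hV : V.PosDef) (μ : Fin p → ℝ) (hα : -1 < α) :
    ∫ y, gaussianPdf V μ y * exp (-(α / 2) * ((y - μ) ⬝ᵥ (V⁻¹ *ᵥ (y - μ))))
      = (1 + α) ^ (-(p : ℝ) / 2) := by
  have hc : 0 < (1 + α) / 2 := by linarith
  simp_rw [gaussianPdf_mul_exp]
  rw [integral_const_mul,
    integral_sub_right_eq_self (fun x => exp (-((1 + α) / 2) * (x ⬝ᵥ (V⁻¹ *ᵥ x)))) μ,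
    integral_exp_neg_mul_quadForm_inv hV, Fintype.card_fin,
    two_mul_pi_rpow_mul_rpow_mul_sqrt_mul_sqrt_pi_div_pow hV.det_pos hc]
  ring_nf

theorem integrable_gaussianPdf_mul_exp_mul_quadForm (hV : V.PosDef) (μ : Fin p → ℝ)
    (hα : -1 < α) (M : Matrix (Fin p) (Fin p) ℝ) :
    Integrable fun y => gaussianPdf V μ y * exp (-(α / 2) * ((y - μ) ⬝ᵥ (V⁻¹ *ᵥ (y - μ)))) *
      ((y - μ) ⬝ᵥ (M *ᵥ (y - μ))) := by
  simp_rw [gaussianPdf_mul_exp, mul_assoc ((2 * π) ^ (-(p : ℝ) / 2) * V.det ^ (-(1 : ℝ) / 2))]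
  have hc : 0 < (1 + α) / 2 := by linarith
  exact ((integrable_exp_neg_mul_quadForm_inv_mul_quadForm hV hc M).comp_sub_right μ).const_mul _

theorem integral_gaussianPdf_mul_exp_mul_quadForm (hV : V.PosDef) (μ : Fin p → ℝ)
    (hα : -1 < α) (M : Matrix (Fin p) (Fin p) ℝ) :
    ∫ y, gaussianPdf V μ y * exp (-(α / 2) * ((y - μ) ⬝ᵥ (V⁻¹ *ᵥ (y - μ)))) *
        ((y - μ) ⬝ᵥ (M *ᵥ (y - μ)))
      = (1 + α) ^ (-(p : ℝ) / 2) / (1 + α) * (M * V).trace := by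
  have hc : 0 < (1 + α) / 2 := by linarith
  simp_rw [gaussianPdf_mul_exp, mul_assoc ((2 * π) ^ (-(p : ℝ) / 2) * V.det ^ (-(1 : ℝ) / 2))]
  rw [integral_const_mul, integral_sub_right_eq_self
      (fun x => exp (-((1 + α) / 2) * (x ⬝ᵥ (V⁻¹ *ᵥ x))) * (x ⬝ᵥ (M *ᵥ x))) μ,
    integral_exp_neg_mul_quadForm_inv_mul_quadForm hV hc, Fintype.card_fin, ← mul_assoc,
    mul_div_assoc', two_mul_pi_rpow_mul_rpow_mul_sqrt_mul_sqrt_pi_div_pow hV.det_pos hc]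
  ring_nf

theorem integral_gaussianPdf (hV : V.PosDef) (μ : Fin p → ℝ) : ∫ y, gaussianPdf V μ y = 1 := by
  simpa using integral_gaussianPdf_mul_exp hV μ (α := 0) (by norm_num)

theorem integrable_gaussianPdf (hV : V.PosDef) (μ : Fin p → ℝ) : Integrable (gaussianPdf V μ) := by
  simpa using integrable_gaussianPdf_mul_exp hV μ (α := 0) (by norm_num)

end GaussianPdf

theorem mdpde_variance_estimating_equation_unbiased_general {p : ℕ}
    (V : Matrix (Fin p) (Fin p) ℝ) (hVpd : V.PosDef)
    (μ : Fin p → ℝ) (α : ℝ) (hα : 0 < α)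
    (U : Matrix (Fin p) (Fin p) ℝ) :
    ∫ y : Fin p → ℝ,
      gaussianPdf V μ y *
        (-(α / 2) * ((2 * Real.pi) ^ (-(p : ℝ) * α / 2) * V.det ^ (-α / 2)) *
            (1 + α) ^ (-(p : ℝ) / 2) * (V⁻¹ * U).trace
          + (α / 2) * (1 + 1 / α) *
              ((2 * Real.pi) ^ (-(p : ℝ) * α / 2) * V.det ^ (-α / 2)) *
              Real.exp (-(α / 2) * ((y - μ) ⬝ᵥ (V⁻¹ *ᵥ (y - μ)))) *
              ((V⁻¹ * U).trace - ((y - μ) ⬝ᵥ ((V⁻¹ * U * V⁻¹) *ᵥ (y - μ))))) = 0 := by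
  set η := (2 * π) ^ (-(p : ℝ) * α / 2) * V.det ^ (-α / 2)
  set T := (V⁻¹ * U).trace
  set φe := fun y => gaussianPdf V μ y * exp (-(α / 2) * ((y - μ) ⬝ᵥ (V⁻¹ *ᵥ (y - μ))))
  have hα' : -1 < α := by linarith
  have h_trace : (V⁻¹ * U * V⁻¹ * V).trace = T := by
    rw [nonsing_inv_mul_cancel_right V _ ((isUnit_iff_isUnit_det V).mp hVpd.isUnit)]
  calc _ = ∫ y, -(α / 2) * η * (1 + α) ^ (-(p : ℝ) / 2) * T * gaussianPdf V μ y
          + (α / 2) * (1 + 1 / α) * η * T * φe y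
          - (α / 2) * (1 + 1 / α) * η * (φe y * ((y - μ) ⬝ᵥ ((V⁻¹ * U * V⁻¹) *ᵥ (y - μ)))) := by
        congr 1 with y
        ring
    _ = -(α / 2) * η * (1 + α) ^ (-(p : ℝ) / 2) * T * 1
          + (α / 2) * (1 + 1 / α) * η * T * (1 + α) ^ (-(p : ℝ) / 2)
          - (α / 2) * (1 + 1 / α) * η * ((1 + α) ^ (-(p : ℝ) / 2) / (1 + α) * T) := by
        rw [integral_sub, integral_add, integral_const_mul, integral_const_mul, integral_const_mul,
          integral_gaussianPdf hVpd, integral_gaussianPdf_mul_exp hVpd μ hα',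
          integral_gaussianPdf_mul_exp_mul_quadForm hVpd μ hα', h_trace]
        · exact (integrable_gaussianPdf hVpd μ).const_mul _
        · exact (integrable_gaussianPdf_mul_exp hVpd μ hα').const_mul _
        · exact ((integrable_gaussianPdf hVpd μ).const_mul _).add
            ((integrable_gaussianPdf_mul_exp hVpd μ hα').const_mul _)
        · exact (integrable_gaussianPdf_mul_exp_mul_quadForm hVpd μ hα' _).const_mul _
    _ = 0 := by
        field_simp
        ring

/-- with `η_α = (2π)^{−pα/2}(det V)^{−α/2}`, the per-observation MDPDE
estimating function for a variance component is unbiased at the true parameter: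
`∫ φ_{μ,V}(y) { −(α/2)η_α(1+α)^{−p/2} Tr(V⁻¹U)`
`  + (α/2)(1+1/α) η_α e^{−(α/2)(y−μ)ᵀV⁻¹(y−μ)} [Tr(V⁻¹U) − (y−μ)ᵀV⁻¹UV⁻¹(y−μ)] } dy = 0`. -/
theorem mdpde_variance_estimating_equation_unbiased {p : ℕ}
    (V : Matrix (Fin p) (Fin p) ℝ) (hVsymm : V.IsSymm) (hVpd : V.PosDef)
    (μ : Fin p → ℝ) (α : ℝ) (hα : 0 < α)
    (U : Matrix (Fin p) (Fin p) ℝ) (hUsymm : U.IsSymm) :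
    ∫ y : Fin p → ℝ,
      gaussianPdf V μ y *
        (-(α / 2) * ((2 * Real.pi) ^ (-(p : ℝ) * α / 2) * V.det ^ (-α / 2)) *
            (1 + α) ^ (-(p : ℝ) / 2) * (V⁻¹ * U).trace
          + (α / 2) * (1 + 1 / α) *
              ((2 * Real.pi) ^ (-(p : ℝ) * α / 2) * V.det ^ (-α / 2)) *
              Real.exp (-(α / 2) * ((y - μ) ⬝ᵥ (V⁻¹ *ᵥ (y - μ)))) *
              ((V⁻¹ * U).trace - ((y - μ) ⬝ᵥ ((V⁻¹ * U * V⁻¹) *ᵥ (y - μ))))) = 0 :=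
  mdpde_variance_estimating_equation_unbiased_general V hVpd μ α hα U
end

section
/- Let V be a symmetric positive definite real p×p matrix, μ ∈ ℝ^p, α > 0, and U a symmetric real p×p matrix. Then the function t ↦ φ_{μ,V}(t)^α · [ Tr(V^{−1}U) − (t−μ)ᵀ V^{−1} U V^{−1} (t−μ) ] is bounded on ℝ^p. Consequently the influence function of the MDPDE variance-components functional T_α^Σ is bounded in the contamination point for every α > 0, i.e., the MDPDE of the variance components is B-robust. -/
/-!
The Gaussian factor is `φ_{μ,V}(μ)^α · exp(-(α/2) q)` with `q = (t-μ)ᵀV⁻¹(t-μ) ≥ 0`, and the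
bracket grows at most linearly in `q`: writing `V⁻¹ = BᵀB`, the form of `V⁻¹UV⁻¹` is the form of
`BUBᵀ` evaluated at `B(t-μ)`, whose squared length is `q`. Since `q e^{-aq}` is bounded, so is
the product.
-/

open Matrix MeasureTheory

namespace Matrix

variable {ι : Type*} [Fintype ι]

theorem abs_dotProduct_mulVec_le (N : Matrix ι ι ℝ) (y : ι → ℝ) :
    |y ⬝ᵥ (N *ᵥ y)| ≤ (∑ i, ∑ j, |N i j|) * (y ⬝ᵥ y) := by
  have hy : ∀ i j, |y i| * |y j| ≤ y ⬝ᵥ y := fun i j => by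
    have hsq : ∀ k, y k * y k ≤ y ⬝ᵥ y := fun k =>
      Finset.single_le_sum (f := fun k => y k * y k) (fun k _ => mul_self_nonneg _)
        (Finset.mem_univ k)
    nlinarith [sq_nonneg (|y i| - |y j|), sq_abs (y i), sq_abs (y j), hsq i, hsq j]
  calc |y ⬝ᵥ (N *ᵥ y)| = |∑ i, ∑ j, y i * N i j * y j| := by
        simp only [dotProduct, mulVec, Finset.mul_sum, mul_assoc]
    _ ≤ ∑ i, ∑ j, |N i j| * (|y i| * |y j|) := by
        refine (Finset.abs_sum_le_sum_abs _ _).trans (Finset.sum_le_sum fun i _ => ?_)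
        refine (Finset.abs_sum_le_sum_abs _ _).trans (Finset.sum_le_sum fun j _ => ?_)
        rw [abs_mul, abs_mul, mul_comm |y i|, mul_assoc]
    _ ≤ ∑ i, ∑ j, |N i j| * (y ⬝ᵥ y) := by gcongr with i _ j _; exact hy i j
    _ = (∑ i, ∑ j, |N i j|) * (y ⬝ᵥ y) := by simp only [Finset.sum_mul]

open scoped MatrixOrder in
theorem PosSemidef.exists_abs_dotProduct_mul_mul_mulVec_le {S : Matrix ι ι ℝ}
    (hS : S.PosSemidef) (A : Matrix ι ι ℝ) :
    ∃ K, 0 ≤ K ∧ ∀ x : ι → ℝ, |x ⬝ᵥ ((S * A * S) *ᵥ x)| ≤ K * (x ⬝ᵥ (S *ᵥ x)) := by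
  classical
  obtain ⟨B, rfl⟩ := CStarAlgebra.nonneg_iff_eq_star_mul_self.mp hS.nonneg
  have hform : ∀ (M : Matrix ι ι ℝ) x,
      x ⬝ᵥ ((star B * M * B) *ᵥ x) = (B *ᵥ x) ⬝ᵥ (M *ᵥ (B *ᵥ x)) := by
    intro M x
    rw [← mulVec_mulVec, ← mulVec_mulVec, dotProduct_mulVec, star_eq_conjTranspose,
      conjTranspose_eq_transpose_of_trivial, vecMul_transpose]
  refine ⟨∑ i, ∑ j, |(B * A * star B) i j|, by positivity, fun x => ?_⟩
  have hsq : x ⬝ᵥ ((star B * B) *ᵥ x) = (B *ᵥ x) ⬝ᵥ (B *ᵥ x) := by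
    simpa only [mul_one, one_mulVec] using hform 1 x
  have hSAS : star B * B * A * (star B * B) = star B * (B * A * star B) * B := by
    simp only [Matrix.mul_assoc]
  rw [hSAS, hform, hsq]
  exact abs_dotProduct_mulVec_le _ _

end Matrix

theorem Real.exp_neg_mul_mul_add_mul_le {a T K q : ℝ} (ha : 0 < a) (hT : 0 ≤ T) (hK : 0 ≤ K)
    (hq : 0 ≤ q) : Real.exp (-(a * q)) * (T + K * q) ≤ T + K / a * Real.exp (-1) := by
  have hexp : Real.exp (-(a * q)) ≤ 1 := Real.exp_le_one_iff.mpr (by nlinarith)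
  have hpeak := Real.mul_exp_neg_le_exp_neg_one (a * q)
  calc Real.exp (-(a * q)) * (T + K * q)
      = Real.exp (-(a * q)) * T + K / a * (a * q * Real.exp (-(a * q))) := by
        field_simp
    _ ≤ T + K / a * Real.exp (-1) := by
        gcongr
        · exact mul_le_of_le_one_left hT hexp

theorem gaussianPdf_eq_mul_exp {p : ℕ} (V : Matrix (Fin p) (Fin p) ℝ) (μ y : Fin p → ℝ) :
    gaussianPdf V μ y =
      gaussianPdf V μ μ * Real.exp (-(1 / 2 : ℝ) * ((y - μ) ⬝ᵥ (V⁻¹ *ᵥ (y - μ)))) := by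
  simp [gaussianPdf]

theorem gaussianPdf_nonneg {p : ℕ} {V : Matrix (Fin p) (Fin p) ℝ} (hV : 0 ≤ V.det)
    (μ y : Fin p → ℝ) : 0 ≤ gaussianPdf V μ y := by
  unfold gaussianPdf
  have := Real.rpow_nonneg hV (-(1 : ℝ) / 2)
  positivity

theorem mdpde_variance_influence_bounded_general {p : ℕ}
    (V : Matrix (Fin p) (Fin p) ℝ) (hVpd : V.PosDef)
    (μ : Fin p → ℝ) (α : ℝ) (hα : 0 < α)
    (U : Matrix (Fin p) (Fin p) ℝ) :
    ∃ C : ℝ, ∀ t : Fin p → ℝ,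
      |gaussianPdf V μ t ^ α *
          ((V⁻¹ * U).trace - ((t - μ) ⬝ᵥ ((V⁻¹ * U * V⁻¹) *ᵥ (t - μ))))| ≤ C := by
  obtain ⟨K, hK0, hK⟩ := hVpd.inv.posSemidef.exists_abs_dotProduct_mul_mul_mulVec_le U
  set c := gaussianPdf V μ μ
  set T := (V⁻¹ * U).trace
  refine ⟨c ^ α * (|T| + K / (α / 2) * Real.exp (-1)), fun t => ?_⟩
  set q := (t - μ) ⬝ᵥ (V⁻¹ *ᵥ (t - μ))
  have hq : 0 ≤ q := by
    simpa only [star_trivial] using hVpd.inv.posSemidef.dotProduct_mulVec_nonneg (t - μ)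
  have hc : 0 ≤ c := gaussianPdf_nonneg hVpd.det_pos.le μ μ
  have hpdf : gaussianPdf V μ t ^ α = c ^ α * Real.exp (-(α / 2 * q)) := by
    rw [gaussianPdf_eq_mul_exp, Real.mul_rpow hc (Real.exp_nonneg _), ← Real.exp_mul]
    congr 2
    ring
  rw [hpdf, abs_mul, abs_of_nonneg (by positivity), mul_assoc]
  gcongr
  calc Real.exp (-(α / 2 * q)) * |T - (t - μ) ⬝ᵥ ((V⁻¹ * U * V⁻¹) *ᵥ (t - μ))|
      ≤ Real.exp (-(α / 2 * q)) * (|T| + K * q) := by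
        gcongr
        exact (abs_sub _ _).trans (by gcongr; exact hK (t - μ))
    _ ≤ |T| + K / (α / 2) * Real.exp (-1) :=
        Real.exp_neg_mul_mul_add_mul_le (by positivity) (abs_nonneg T) hK0 hq

/-- for every `α > 0` and symmetric `U`, the function
`t ↦ φ_{μ,V}(t)^α [Tr(V⁻¹U) − (t−μ)ᵀV⁻¹UV⁻¹(t−μ)]` is bounded on `ℝ^p`; hence the
influence function of the MDPDE variance-components functional `T_α^Σ` is bounded in the
contamination point, i.e. the MDPDE of the variance components is B-robust for `α > 0`. -/
theorem mdpde_variance_influence_bounded {p : ℕ}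
    (V : Matrix (Fin p) (Fin p) ℝ) (hVsymm : V.IsSymm) (hVpd : V.PosDef)
    (μ : Fin p → ℝ) (α : ℝ) (hα : 0 < α)
    (U : Matrix (Fin p) (Fin p) ℝ) (hUsymm : U.IsSymm) :
    ∃ C : ℝ, ∀ t : Fin p → ℝ,
      |gaussianPdf V μ t ^ α *
          ((V⁻¹ * U).trace - ((t - μ) ⬝ᵥ ((V⁻¹ * U * V⁻¹) *ᵥ (t - μ))))| ≤ C :=
  mdpde_variance_influence_bounded_general V hVpd μ α hα U
end
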